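/- arXiv:2203.12938 — 10 statements merged into one kernel-verified Lean document; each statement's English description precedes it below -/
import Mathlib

section
/- Let a, m̂ ∈ ℝ and set m = m̂/√(1+a²), Z̃ = (0,a) ∈ ℝ², and Z = (0, a, −1)/√(1+a²) ∈ S_SH. Suppose q̃ = (x̃,ỹ) : I → ℝ² \ {Z̃} is a C² curve satisfying the planar Kepler equation d²q̃/dt² = −m · ‖q̃ − Z̃‖_a^{−3} · (q̃ − Z̃). Let τ ↦ t(τ) solve dt/dτ = x̃(t)² + ỹ(t)² + 1 and set q(τ) := π(q̃(t(τ))). Then for every τ, the tangential part of the second derivative satisfies q''(τ) − ⟨q''(τ), q(τ)⟩ q(τ) = m̂ · (1 − ⟨q(τ),Z⟩²)^{−3/2} · (Z − ⟨q(τ),Z⟩ q(τ)); i.e., the central projection carries solutions of the planar Kepler problem with norm ‖·‖_a and mass m = m̂/√(1+a²) to solutions of the spherical Kepler problem with force function m̂ cot θ_Z on the southern hemisphere. -/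
noncomputable section

/-- The affine norm `‖(x,y)‖ₐ = √(x² + y²/(1+a²))` on the plane. -/
def normA (a : ℝ) (p : ℝ × ℝ) : ℝ := Real.sqrt (p.1 ^ 2 + p.2 ^ 2 / (1 + a ^ 2))

/-- Central projection from the plane `{z = -1}` (identified with `ℝ²`) onto the
open southern hemisphere of the unit sphere in `ℝ³`. -/
def centralProj (p : ℝ × ℝ) : ℝ × ℝ × ℝ :=
  (Real.sqrt (p.1 ^ 2 + p.2 ^ 2 + 1))⁻¹ • (p.1, p.2, (-1 : ℝ))

/-- The Euclidean dot product on `ℝ³ = ℝ × ℝ × ℝ`. -/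
def dot3 (u v : ℝ × ℝ × ℝ) : ℝ := u.1 * v.1 + u.2.1 * v.2.1 + u.2.2 * v.2.2

/-
Write `V = (x, y, -1)` for the lifted planar motion and `R = |V|`, so that `q = V / R` and
`d/dτ = R² d/dt`. Then `q'' = R² (R V̈ - R̈ V)`, and since `V` is normal to the sphere at `q`, the
tangential part of `q''` is `R³` times that of `V̈ = -(m / N³) (V - √(1+a²) Z)`, where
`N = ‖q̃ - Z̃‖ₐ`; that is, `R³ m √(1+a²) / N³ = m̂ (R / N)³` times the tangential part of `Z`.
Lagrange's identity `|V|² |(0,a,-1)|² - ⟨V, (0,a,-1)⟩² = (1+a²) N²` gives `1 - ⟨q, Z⟩² = (N / R)²`.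
-/

section Reparametrization

variable {E : Type*} [NormedAddCommGroup E] [NormedSpace ℝ E]

theorem deriv_comp_eq_of_hasDerivAt {f : ℝ → E} {t g : ℝ → ℝ} (hf : Differentiable ℝ f)
    (ht : ∀ τ, HasDerivAt t (g (t τ)) τ) :
    deriv (fun τ => f (t τ)) = fun τ => g (t τ) • deriv f (t τ) :=
  funext fun τ => ((hf (t τ)).hasDerivAt.scomp τ (ht τ)).deriv

variable {R : ℝ → ℝ} {V : ℝ → E}

theorem sq_smul_deriv_inv_smul (hR : Differentiable ℝ R) (hR0 : ∀ s, R s ≠ 0)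
    (hV : Differentiable ℝ V) (s : ℝ) :
    R s ^ 2 • deriv (fun u => (R u)⁻¹ • V u) s = R s • deriv V s - deriv R s • V s := by
  have h : HasDerivAt (fun u => (R u)⁻¹ • V u) _ s :=
    ((hR s).hasDerivAt.inv (hR0 s)).smul (hV s).hasDerivAt
  rw [h.deriv, Pi.inv_apply, smul_add, smul_smul, smul_smul, sub_eq_add_neg, ← neg_smul]
  congr 2 <;> field_simp [hR0 s]

theorem hasDerivAt_smul_deriv_sub_deriv_smul (hR : ContDiff ℝ 2 R) (hV : ContDiff ℝ 2 V)
    (s : ℝ) :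
    HasDerivAt (fun u => R u • deriv V u - deriv R u • V u)
      (R s • deriv (deriv V) s - deriv (deriv R) s • V s) s := by
  have hR' := (hR.differentiable two_ne_zero s).hasDerivAt
  have hR'' := (hR.differentiable_deriv_two s).hasDerivAt
  have hV' := (hV.differentiable two_ne_zero s).hasDerivAt
  have hV'' := (hV.differentiable_deriv_two s).hasDerivAt
  exact ((hR'.smul hV'').sub (hR''.smul hV')).congr_deriv (by abel)

theorem deriv_deriv_inv_smul_comp (hR : ContDiff ℝ 2 R) (hR0 : ∀ s, R s ≠ 0)
    (hV : ContDiff ℝ 2 V) {t : ℝ → ℝ} (ht : ∀ τ, HasDerivAt t (R (t τ) ^ 2) τ) (τ : ℝ) :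
    deriv (deriv fun τ => (R (t τ))⁻¹ • V (t τ)) τ
      = R (t τ) ^ 2 • (R (t τ) • deriv (deriv V) (t τ) - deriv (deriv R) (t τ) • V (t τ)) := by
  have hR1 := hR.differentiable two_ne_zero
  have hV1 := hV.differentiable two_ne_zero
  rw [deriv_comp_eq_of_hasDerivAt (f := fun u => (R u)⁻¹ • V u) (g := fun u => R u ^ 2)
    ((hR1.inv hR0).smul hV1) ht]
  simp_rw [sq_smul_deriv_inv_smul hR1 hR0 hV1]
  rw [deriv_comp_eq_of_hasDerivAt (g := fun u => R u ^ 2)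
    (fun s => (hasDerivAt_smul_deriv_sub_deriv_smul hR hV s).differentiableAt) ht]
  exact congrArg _ (hasDerivAt_smul_deriv_sub_deriv_smul hR hV _).deriv

end Reparametrization

theorem dot3_comm (u v : ℝ × ℝ × ℝ) : dot3 u v = dot3 v u := by
  simp only [dot3]; ring

def tangentialProj (q : ℝ × ℝ × ℝ) : (ℝ × ℝ × ℝ) →ₗ[ℝ] ℝ × ℝ × ℝ where
  toFun v := v - dot3 v q • q
  map_add' u v := by ext <;> simp only [dot3, Prod.fst_add, Prod.snd_add, Prod.smul_fst,
    Prod.smul_snd, Prod.fst_sub, Prod.snd_sub, smul_eq_mul] <;> ring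
  map_smul' c v := by ext <;> simp only [dot3, Prod.smul_fst, Prod.smul_snd, Prod.fst_sub,
    Prod.snd_sub, smul_eq_mul, RingHom.id_apply] <;> ring

theorem tangentialProj_apply (q v : ℝ × ℝ × ℝ) :
    tangentialProj q v = v - dot3 v q • q := rfl

theorem tangentialProj_smul_self {q : ℝ × ℝ × ℝ} (hq : dot3 q q = 1) (c : ℝ) :
    tangentialProj q (c • q) = 0 := by
  have h : dot3 (c • q) q = c * dot3 q q := by
    simp only [dot3, Prod.smul_fst, Prod.smul_snd, smul_eq_mul]; ring
  change c • q - dot3 (c • q) q • q = 0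
  rw [h, hq, mul_one, sub_self]

theorem dot3_centralProj_self (p : ℝ × ℝ) : dot3 (centralProj p) (centralProj p) = 1 := by
  have h : 0 < p.1 ^ 2 + p.2 ^ 2 + 1 := by positivity
  simp only [dot3, centralProj, Prod.smul_mk, smul_eq_mul]
  field_simp
  rw [Real.sq_sqrt h.le]

theorem sqrt_smul_centralProj (p : ℝ × ℝ) :
    √(p.1 ^ 2 + p.2 ^ 2 + 1) • centralProj p = (p.1, p.2, -1) := by
  rw [centralProj, smul_smul, mul_inv_cancel₀ (by positivity), one_smul]

theorem one_sub_dot3_centralProj_sq (a : ℝ) (p : ℝ × ℝ) :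
    1 - dot3 (centralProj p) ((√(1 + a ^ 2))⁻¹ • (0, a, -1)) ^ 2
      = (normA a (p - (0, a)) / √(p.1 ^ 2 + p.2 ^ 2 + 1)) ^ 2 := by
  have hP : 0 < 1 + a ^ 2 := by positivity
  have hR : 0 < p.1 ^ 2 + p.2 ^ 2 + 1 := by positivity
  simp only [dot3, centralProj, normA, Prod.smul_mk, smul_eq_mul, Prod.fst_sub, Prod.snd_sub,
    div_pow, Real.sq_sqrt (by positivity : 0 ≤ (p.1 - 0) ^ 2 + (p.2 - a) ^ 2 / (1 + a ^ 2))]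
  have hP0 : √(1 + a ^ 2) ≠ 0 := by positivity
  have hR0 : √(p.1 ^ 2 + p.2 ^ 2 + 1) ≠ 0 := by positivity
  have hP2 := Real.sq_sqrt hP.le
  have hR2 := Real.sq_sqrt hR.le
  generalize √(1 + a ^ 2) = P at hP0 hP2 ⊢
  generalize √(p.1 ^ 2 + p.2 ^ 2 + 1) = R at hR0 hR2 ⊢
  field_simp
  rw [hP2, hR2]
  ring

theorem rpow_sq_neg_three_halves {x : ℝ} (hx : 0 ≤ x) : (x ^ 2) ^ (-(3 : ℝ) / 2) = (x ^ 3)⁻¹ := by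
  rw [← Real.rpow_natCast x 2, ← Real.rpow_mul hx, show ((2 : ℕ) : ℝ) * (-3 / 2) = -(3 : ℕ) by
    norm_num, Real.rpow_neg hx, Real.rpow_natCast]

theorem tangentialProj_centralProj_lift (p : ℝ × ℝ) :
    tangentialProj (centralProj p) (p.1, p.2, -1) = 0 := by
  rw [← sqrt_smul_centralProj, tangentialProj_smul_self (dot3_centralProj_self p)]

theorem tangentialProj_centralProj_kepler (a m : ℝ) (p : ℝ × ℝ) :
    tangentialProj (centralProj p)
        ((-(m / normA a (p - (0, a)) ^ 3) • (p - (0, a))).1,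
          (-(m / normA a (p - (0, a)) ^ 3) • (p - (0, a))).2, 0)
      = (m * √(1 + a ^ 2) / normA a (p - (0, a)) ^ 3) •
          tangentialProj (centralProj p) ((√(1 + a ^ 2))⁻¹ • (0, a, -1)) := by
  have hP : √(1 + a ^ 2) ≠ 0 := by positivity
  have h : ((-(m / normA a (p - (0, a)) ^ 3) • (p - (0, a))).1,
        (-(m / normA a (p - (0, a)) ^ 3) • (p - (0, a))).2, (0 : ℝ))
      = -(m / normA a (p - (0, a)) ^ 3) • ((p.1, p.2, -1) - √(1 + a ^ 2) •
          ((√(1 + a ^ 2))⁻¹ • ((0 : ℝ), a, (-1 : ℝ)))) := by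
    rw [smul_smul, mul_inv_cancel₀ hP, one_smul]
    ext <;> simp
  rw [h, map_smul, map_sub, tangentialProj_centralProj_lift, map_smul, zero_sub, smul_neg,
    neg_smul, neg_neg, smul_smul]
  congr 1
  ring

theorem hasDerivAt_fst_snd_const {c : ℝ → ℝ × ℝ} {c' : ℝ × ℝ} {s : ℝ} (h : HasDerivAt c c' s)
    (z : ℝ) : HasDerivAt (fun u => ((c u).1, (c u).2, z)) (c'.1, c'.2, 0) s :=
  h.fst.prodMk (h.snd.prodMk (hasDerivAt_const s z))

theorem deriv_deriv_fst_snd_const {c : ℝ → ℝ × ℝ} (hc : ContDiff ℝ 2 c) (z s : ℝ) :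
    deriv (deriv fun u => ((c u).1, (c u).2, z)) s
      = ((deriv (deriv c) s).1, (deriv (deriv c) s).2, 0) := by
  have hc' : deriv (fun u => ((c u).1, (c u).2, z)) = fun u => ((deriv c u).1, (deriv c u).2, 0) :=
    funext fun u => (hasDerivAt_fst_snd_const (hc.differentiable two_ne_zero u).hasDerivAt z).deriv
  rw [hc']
  exact (hasDerivAt_fst_snd_const (hc.differentiable_deriv_two s).hasDerivAt 0).deriv

theorem kepler_central_projection_sphere_general
    (a mhat m : ℝ) (hm : m = mhat / Real.sqrt (1 + a ^ 2))
    (Zt : ℝ × ℝ) (hZt : Zt = (0, a))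
    (Z : ℝ × ℝ × ℝ) (hZ : Z = (Real.sqrt (1 + a ^ 2))⁻¹ • ((0 : ℝ), a, (-1 : ℝ)))
    (qt : ℝ → ℝ × ℝ) (hC2 : ContDiff ℝ 2 qt)
    (hODE : ∀ s, deriv (deriv qt) s
        = -(m / (normA a (qt s - Zt)) ^ 3) • (qt s - Zt))
    (t : ℝ → ℝ)
    (ht : ∀ τ, HasDerivAt t ((qt (t τ)).1 ^ 2 + (qt (t τ)).2 ^ 2 + 1) τ)
    (q : ℝ → ℝ × ℝ × ℝ) (hq : q = fun τ => centralProj (qt (t τ))) :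
    ∀ τ, deriv (deriv q) τ - dot3 (deriv (deriv q) τ) (q τ) • q τ
      = (mhat * (1 - dot3 (q τ) Z ^ 2) ^ (-(3 : ℝ) / 2)) •
          (Z - dot3 (q τ) Z • q τ) := by
  subst hm hZt hZ hq
  intro τ
  set R : ℝ → ℝ := fun s => √((qt s).1 ^ 2 + (qt s).2 ^ 2 + 1) with hR_def
  set V : ℝ → ℝ × ℝ × ℝ := fun s => ((qt s).1, (qt s).2, -1)
  have hR : ContDiff ℝ 2 R :=
    (((hC2.fst.pow 2).add (hC2.snd.pow 2)).add contDiff_const).sqrt fun s => by positivity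
  have hV : ContDiff ℝ 2 V := hC2.fst.prodMk (hC2.snd.prodMk contDiff_const)
  have ht' : ∀ τ, HasDerivAt t (R (t τ) ^ 2) τ := fun τ => by
    rw [hR_def, Real.sq_sqrt (by positivity)]; exact ht τ
  have hq'' : deriv (deriv fun τ => centralProj (qt (t τ))) τ = _ :=
    deriv_deriv_inv_smul_comp hR (fun s => by positivity) hV ht' τ
  simp only [one_sub_dot3_centralProj_sq]
  rw [dot3_comm (centralProj _), ← tangentialProj_apply, ← tangentialProj_apply, hq'', map_smul,
    map_sub, map_smul, map_smul, deriv_deriv_fst_snd_const hC2, hODE]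
  simp only [V, tangentialProj_centralProj_lift, tangentialProj_centralProj_kepler]
  have hN : 0 ≤ normA a (qt (t τ) - (0, a)) := Real.sqrt_nonneg _
  have hP : √(1 + a ^ 2) ≠ 0 := by positivity
  rw [smul_zero, sub_zero, smul_smul, smul_smul, rpow_sq_neg_three_halves (by positivity)]
  congr 1
  field_simp
  ring

/-- The central projection carries solutions of the planar Kepler problem with
norm `‖·‖ₐ` and mass `m = m̂/√(1+a²)` to solutions of the spherical Kepler problem
with force function `m̂ cot θ_Z` on the southern hemisphere. -/
theorem kepler_central_projection_sphere
    (a mhat m : ℝ) (hm : m = mhat / Real.sqrt (1 + a ^ 2))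
    (Zt : ℝ × ℝ) (hZt : Zt = (0, a))
    (Z : ℝ × ℝ × ℝ) (hZ : Z = (Real.sqrt (1 + a ^ 2))⁻¹ • ((0 : ℝ), a, (-1 : ℝ)))
    (qt : ℝ → ℝ × ℝ) (hne : ∀ s, qt s ≠ Zt) (hC2 : ContDiff ℝ 2 qt)
    (hODE : ∀ s, deriv (deriv qt) s
        = -(m / (normA a (qt s - Zt)) ^ 3) • (qt s - Zt))
    (t : ℝ → ℝ)
    (ht : ∀ τ, HasDerivAt t ((qt (t τ)).1 ^ 2 + (qt (t τ)).2 ^ 2 + 1) τ)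
    (q : ℝ → ℝ × ℝ × ℝ) (hq : q = fun τ => centralProj (qt (t τ))) :
    ∀ τ, deriv (deriv q) τ - dot3 (deriv (deriv q) τ) (q τ) • q τ
      = (mhat * (1 - dot3 (q τ) Z ^ 2) ^ (-(3 : ℝ) / 2)) •
          (Z - dot3 (q τ) Z • q τ) :=
  kepler_central_projection_sphere_general a mhat m hm Zt hZt Z hZ qt hC2 hODE t ht q hq
end
end

section
/- Let a, f ∈ ℝ and Z₀ = (0,0,−1). Suppose q̃ = (x̃,ỹ) : I → ℝ² is a C² curve satisfying the planar Hooke equation d²q̃/dt² = 2f · q̃ (which is the equation of motion of the Hooke problem with force function f‖q̃‖_a² for every choice of a). Let τ ↦ t(τ) solve dt/dτ = x̃(t)² + ỹ(t)² + 1 and set q(τ) := π(q̃(t(τ))). Then for every τ, q''(τ) − ⟨q''(τ), q(τ)⟩ q(τ) = −2f · ⟨q(τ),Z₀⟩^{−3} · (Z₀ − ⟨q(τ),Z₀⟩ q(τ)); i.e., the central projection carries solutions of the planar Hooke problem to solutions of the spherical Hooke problem with force function f tan² θ_{Z₀} on the southern hemisphere. -/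
/-!
Put the planar curve in the plane `z = -1`: `u = (x̃, ỹ, -1)` and `v = (x̃', ỹ', 0)`, both read at
time `t(τ)`, and `R = |u|`, so that `q = R⁻¹ u`. In the time `τ` one has `u' = R² v` and
`v' = 2f R² (u - Z₀)`. Differentiating `q = R⁻¹ u` twice, the two terms in `v` cancel, leaving
`q'' = c q - 2f R³ Z₀` for some scalar `c`. Since `|q| = 1` and `⟨q, Z₀⟩ = R⁻¹`, the tangential part
of `q''` is `-2f ⟨q, Z₀⟩⁻³ (Z₀ - ⟨q, Z₀⟩ q)`.
-/

noncomputable section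

theorem dot3_add_left (u v w : ℝ × ℝ × ℝ) : dot3 (u + v) w = dot3 u w + dot3 v w := by
  simp only [dot3, Prod.fst_add, Prod.snd_add]; ring

theorem dot3_smul_left (c : ℝ) (u v : ℝ × ℝ × ℝ) : dot3 (c • u) v = c * dot3 u v := by
  simp only [dot3, Prod.smul_fst, Prod.smul_snd, smul_eq_mul]; ring

theorem dot3_smul_right (c : ℝ) (u v : ℝ × ℝ × ℝ) : dot3 u (c • v) = c * dot3 u v := by
  rw [dot3_comm, dot3_smul_left, dot3_comm]

theorem HasDerivAt.dot3 {u v : ℝ → ℝ × ℝ × ℝ} {u' v' : ℝ × ℝ × ℝ} {τ : ℝ}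
    (hu : HasDerivAt u u' τ) (hv : HasDerivAt v v' τ) :
    HasDerivAt (fun s => dot3 (u s) (v s)) (dot3 u' (v τ) + dot3 (u τ) v') τ := by
  have h₁ := (ContinuousLinearMap.fst ℝ ℝ (ℝ × ℝ)).hasFDerivAt.comp_hasDerivAt τ hu
  have h₂ := (ContinuousLinearMap.fst ℝ ℝ ℝ).hasFDerivAt.comp_hasDerivAt τ
    ((ContinuousLinearMap.snd ℝ ℝ (ℝ × ℝ)).hasFDerivAt.comp_hasDerivAt τ hu)
  have h₃ := (ContinuousLinearMap.snd ℝ ℝ ℝ).hasFDerivAt.comp_hasDerivAt τ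
    ((ContinuousLinearMap.snd ℝ ℝ (ℝ × ℝ)).hasFDerivAt.comp_hasDerivAt τ hu)
  have k₁ := (ContinuousLinearMap.fst ℝ ℝ (ℝ × ℝ)).hasFDerivAt.comp_hasDerivAt τ hv
  have k₂ := (ContinuousLinearMap.fst ℝ ℝ ℝ).hasFDerivAt.comp_hasDerivAt τ
    ((ContinuousLinearMap.snd ℝ ℝ (ℝ × ℝ)).hasFDerivAt.comp_hasDerivAt τ hv)
  have k₃ := (ContinuousLinearMap.snd ℝ ℝ ℝ).hasFDerivAt.comp_hasDerivAt τ
    ((ContinuousLinearMap.snd ℝ ℝ (ℝ × ℝ)).hasFDerivAt.comp_hasDerivAt τ hv)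
  refine (((h₁.fun_mul k₁).fun_add (h₂.fun_mul k₂)).fun_add (h₃.fun_mul k₃)).congr_deriv ?_
  simp only [_root_.dot3, Function.comp_apply, ContinuousLinearMap.coe_fst',
    ContinuousLinearMap.coe_snd']
  ring

theorem smul_add_smul_sub_dot3_smul {Q : ℝ × ℝ × ℝ} (hQ : dot3 Q Q = 1) (c d : ℝ)
    (e : ℝ × ℝ × ℝ) :
    c • Q + d • e - dot3 (c • Q + d • e) Q • Q = d • (e - dot3 Q e • Q) := by
  rw [dot3_add_left, dot3_smul_left, dot3_smul_left, hQ, dot3_comm e]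
  module

theorem exists_deriv_deriv_inv_smul_eq {E : Type*} [NormedAddCommGroup E] [NormedSpace ℝ E]
    {R R' : ℝ → ℝ} {u v v' : ℝ → E}
    (hR : ∀ τ, HasDerivAt R (R' τ) τ) (hR0 : ∀ τ, R τ ≠ 0) (hR' : Differentiable ℝ R')
    (hu : ∀ τ, HasDerivAt u (R τ ^ 2 • v τ) τ) (hv : ∀ τ, HasDerivAt v (v' τ) τ) (τ : ℝ) :
    ∃ c : ℝ, deriv (deriv fun s => (R s)⁻¹ • u s) τ = c • u τ + R τ • v' τ := by
  have hQ' : ∀ s, HasDerivAt (fun s => (R s)⁻¹ • u s) (-(R' s / R s ^ 2) • u s + R s • v s) s := by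
    intro s
    convert ((hR s).fun_inv (hR0 s)).fun_smul (hu s) using 1
    rw [smul_smul, inv_mul_eq_div, pow_two, mul_div_cancel_right₀ _ (hR0 s), neg_div, add_comm]
  have hc : DifferentiableAt ℝ (fun s => -(R' s / R s ^ 2)) τ :=
    ((hR' τ).div ((hR τ).differentiableAt.pow 2) (pow_ne_zero 2 (hR0 τ))).neg
  refine ⟨deriv (fun s => -(R' s / R s ^ 2)) τ, ?_⟩
  rw [funext fun s => (hQ' s).deriv,
    ((hc.hasDerivAt.fun_smul (hu τ)).fun_add ((hR τ).fun_smul (hv τ))).deriv, smul_smul,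
    neg_mul, div_mul_cancel₀ _ (pow_ne_zero 2 (hR0 τ))]
  module

def normalize3 (u : ℝ × ℝ × ℝ) : ℝ × ℝ × ℝ := (√(dot3 u u))⁻¹ • u

theorem dot3_normalize3_self {u : ℝ × ℝ × ℝ} (hu : 0 < dot3 u u) :
    dot3 (normalize3 u) (normalize3 u) = 1 := by
  rw [normalize3, dot3_smul_left, dot3_smul_right, ← mul_assoc, ← mul_inv,
    Real.mul_self_sqrt hu.le, inv_mul_cancel₀ hu.ne']

theorem hasDerivAt_sqrt_dot3_self {u : ℝ → ℝ × ℝ × ℝ} {u' : ℝ × ℝ × ℝ} {τ : ℝ}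
    (hu : HasDerivAt u u' τ) (hpos : 0 < dot3 (u τ) (u τ)) :
    HasDerivAt (fun s => √(dot3 (u s) (u s))) (dot3 (u τ) u' / √(dot3 (u τ) (u τ))) τ := by
  refine ((hu.dot3 hu).sqrt hpos.ne').congr_deriv ?_
  have hR0 : √(dot3 (u τ) (u τ)) ≠ 0 := (Real.sqrt_pos.2 hpos).ne'
  rw [dot3_comm u']
  field_simp
  ring

theorem spherical_hooke_of_lift {f : ℝ} {e : ℝ × ℝ × ℝ} {u v : ℝ → ℝ × ℝ × ℝ}
    (hpos : ∀ τ, 0 < dot3 (u τ) (u τ)) (hue : ∀ τ, dot3 (u τ) e = 1)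
    (hu : ∀ τ, HasDerivAt u (dot3 (u τ) (u τ) • v τ) τ)
    (hv : ∀ τ, HasDerivAt v (dot3 (u τ) (u τ) • (2 * f) • (u τ - e)) τ) (τ : ℝ) :
    let q := fun s => normalize3 (u s)
    deriv (deriv q) τ - dot3 (deriv (deriv q) τ) (q τ) • q τ
      = (-(2 * f) / (dot3 (q τ) e) ^ 3) • (e - dot3 (q τ) e • q τ) := by
  set R := fun s => √(dot3 (u s) (u s))
  have hR0 : ∀ s, R s ≠ 0 := fun s => (Real.sqrt_pos.2 (hpos s)).ne'
  have hRsq : ∀ s, R s ^ 2 = dot3 (u s) (u s) := fun s => Real.sq_sqrt (hpos s).le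
  have hR : ∀ s, HasDerivAt R (R s * dot3 (u s) (v s)) s := by
    intro s
    refine (hasDerivAt_sqrt_dot3_self (hu s) (hpos s)).congr_deriv ?_
    change dot3 (u s) (dot3 (u s) (u s) • v s) / R s = _
    rw [dot3_smul_right, ← hRsq]
    field_simp [hR0 s]
  have hR' : Differentiable ℝ fun s => R s * dot3 (u s) (v s) := fun s =>
    ((hR s).fun_mul ((hu s).dot3 (hv s))).differentiableAt
  obtain ⟨c, hc⟩ := exists_deriv_deriv_inv_smul_eq hR hR0 hR' (v := v)
    (fun s => by rw [hRsq]; exact hu s) hv τ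
  intro q
  set Q := q τ
  have hQ : Q = (R τ)⁻¹ • u τ := rfl
  have hQQ : dot3 Q Q = 1 := dot3_normalize3_self (hpos τ)
  have hQe : dot3 Q e = (R τ)⁻¹ := by rw [hQ, dot3_smul_left, hue, mul_one]
  have hu_eq : u τ = R τ • Q := by
    rw [hQ, smul_smul, mul_inv_cancel₀ (hR0 τ), one_smul]
  have hq'' :
      deriv (deriv q) τ = (c * R τ + 2 * f * R τ ^ 4) • Q + (-(2 * f) * R τ ^ 3) • e := by
    rw [show q = fun s => (R s)⁻¹ • u s from rfl, hc, ← hRsq, hu_eq]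
    module
  rw [hq'', smul_add_smul_sub_dot3_smul hQQ, hQe, inv_pow, div_inv_eq_mul]

def liftVec : ℝ × ℝ →L[ℝ] ℝ × ℝ × ℝ :=
  (ContinuousLinearMap.fst ℝ ℝ ℝ).prod ((ContinuousLinearMap.snd ℝ ℝ ℝ).prod 0)

def liftPoint (p : ℝ × ℝ) : ℝ × ℝ × ℝ := liftVec p + (0, 0, -1)

theorem dot3_liftPoint_self (p : ℝ × ℝ) :
    dot3 (liftPoint p) (liftPoint p) = p.1 ^ 2 + p.2 ^ 2 + 1 := by
  simp [dot3, liftPoint, liftVec, sq]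

theorem dot3_liftPoint_south (p : ℝ × ℝ) : dot3 (liftPoint p) (0, 0, -1) = 1 := by
  simp [dot3, liftPoint, liftVec]

theorem centralProj_eq_normalize3 (p : ℝ × ℝ) : centralProj p = normalize3 (liftPoint p) := by
  rw [centralProj, normalize3, dot3_liftPoint_self]
  congr 1
  ext <;> simp [liftPoint, liftVec]

theorem hooke_central_projection_sphere_general
    (f : ℝ)
    (Z0 : ℝ × ℝ × ℝ) (hZ0 : Z0 = ((0 : ℝ), (0 : ℝ), (-1 : ℝ)))
    (qt : ℝ → ℝ × ℝ) (hC2 : ContDiff ℝ 2 qt)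
    (hODE : ∀ s, deriv (deriv qt) s = (2 * f) • qt s)
    (t : ℝ → ℝ)
    (ht : ∀ τ, HasDerivAt t ((qt (t τ)).1 ^ 2 + (qt (t τ)).2 ^ 2 + 1) τ)
    (q : ℝ → ℝ × ℝ × ℝ) (hq : q = fun τ => centralProj (qt (t τ))) :
    ∀ τ, deriv (deriv q) τ - dot3 (deriv (deriv q) τ) (q τ) • q τ
      = (-(2 * f) / (dot3 (q τ) Z0) ^ 3) • (Z0 - dot3 (q τ) Z0 • q τ) := by
  subst hZ0 hq
  simp only [centralProj_eq_normalize3]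
  refine spherical_hooke_of_lift (u := fun τ => liftPoint (qt (t τ)))
    (v := fun τ => liftVec (deriv qt (t τ))) (fun τ => ?_) (fun τ => dot3_liftPoint_south _)
    (fun τ => ?_) (fun τ => ?_)
  · rw [dot3_liftPoint_self]; positivity
  · rw [dot3_liftPoint_self, ← map_smul]
    exact (liftVec.hasFDerivAt.comp_hasDerivAt τ
      (((hC2.differentiable (by norm_num)) (t τ)).hasDerivAt.scomp τ (ht τ))).add_const _
  · rw [dot3_liftPoint_self, liftPoint, add_sub_cancel_right, ← map_smul, ← map_smul, ← hODE]
    exact liftVec.hasFDerivAt.comp_hasDerivAt τ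
      ((hC2.differentiable_deriv_two (t τ)).hasDerivAt.scomp τ (ht τ))

/-- The central projection carries solutions of the planar Hooke problem
(with force function `f‖·‖ₐ²` for every `a`) to solutions of the spherical Hooke
problem with force function `f tan² θ_{Z₀}` on the southern hemisphere. -/
theorem hooke_central_projection_sphere
    (a f : ℝ)
    (Z0 : ℝ × ℝ × ℝ) (hZ0 : Z0 = ((0 : ℝ), (0 : ℝ), (-1 : ℝ)))
    (qt : ℝ → ℝ × ℝ) (hC2 : ContDiff ℝ 2 qt)
    (hODE : ∀ s, deriv (deriv qt) s = (2 * f) • qt s)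
    (t : ℝ → ℝ)
    (ht : ∀ τ, HasDerivAt t ((qt (t τ)).1 ^ 2 + (qt (t τ)).2 ^ 2 + 1) τ)
    (q : ℝ → ℝ × ℝ × ℝ) (hq : q = fun τ => centralProj (qt (t τ))) :
    ∀ τ, deriv (deriv q) τ - dot3 (deriv (deriv q) τ) (q τ) • q τ
      = (-(2 * f) / (dot3 (q τ) Z0) ^ 3) • (Z0 - dot3 (q τ) Z0 • q τ) :=
  hooke_central_projection_sphere_general f Z0 hZ0 qt hC2 hODE t ht q hq
end
end

section
/- Let a ∈ ℝ, m₁, m₂, f ∈ ℝ, m̂ᵢ = √(1+a²)·mᵢ, Z̃₁ = (0,a), Z̃₂ = (0,−a). Suppose q̃ = (x̃,ỹ) : I → ℝ² \ {Z̃₁, Z̃₂} is a C² solution of the planar Lagrange equation d²q̃/dt² = −m₁‖q̃−Z̃₁‖_a^{−3}(q̃−Z̃₁) − m₂‖q̃−Z̃₂‖_a^{−3}(q̃−Z̃₂) + 2f·q̃. Then the spherical energy E_sp(x̃,ỹ,dx̃/dt,dỹ/dt) := [(1+ỹ²)(dx̃/dt)² − 2x̃ỹ(dx̃/dt)(dỹ/dt)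 + (1+x̃²)(dỹ/dt)²]/2 − m̂₁(aỹ+1)/√((ỹ−a)² + (1+a²)x̃²) − m̂₂(1−aỹ)/√((ỹ+a)² + (1+a²)x̃²) − f(x̃² + ỹ²) is constant along the solution; i.e., E_sp is a first integral of the planar Lagrange problem. -/
/-!
Write `q = (x, y)`, `q' = (u, v)` and `L = x v - y u`. The kinetic part of `E_sp` is
`(|q'|² + L²) / 2`, so its derivative is `q'·q'' + L L'`, with `L' = q × q''`. The force of
the centre `(0, c)` is `-k (q - (0, c))` with `k = m̂ (1 + a²) / D³`, where
`D = √(1 + a²) ‖q - (0, c)‖ₐ`; it contributes `-k q'·(q - (0, c))` to `q'·q''` and the torque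
`k c x` to `L'`, and for `c = ±a` the resulting term of the energy derivative is exactly the
derivative of the Kepler term `m̂ (c y + 1) / D` of `E_sp`. The Hooke force `2 f q` cancels
against `-f (x² + y²)`.
-/

noncomputable section

/-- The energy of the spherical Lagrange problem, expressed in the gnomonic
chart with planar time derivatives. -/
def Esp (a mhat₁ mhat₂ f x y u v : ℝ) : ℝ :=
  ((1 + y ^ 2) * u ^ 2 - 2 * x * y * u * v + (1 + x ^ 2) * v ^ 2) / 2
    - mhat₁ * (a * y + 1) / Real.sqrt ((y - a) ^ 2 + (1 + a ^ 2) * x ^ 2)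
    - mhat₂ * (1 - a * y) / Real.sqrt ((y + a) ^ 2 + (1 + a ^ 2) * x ^ 2)
    - f * (x ^ 2 + y ^ 2)

open Real

section ProdDeriv

variable {𝕜 E F : Type*} [NontriviallyNormedField 𝕜]
  [NormedAddCommGroup E] [NormedSpace 𝕜 E] [NormedAddCommGroup F] [NormedSpace 𝕜 F] {f : 𝕜 → E × F} {f' : E × F} {t : 𝕜}

theorem HasDerivAt.fst (h : HasDerivAt f f' t) : HasDerivAt (fun s => (f s).1) f'.1 t := by
  simpa using h.hasFDerivAt.fst.hasDerivAt

theorem HasDerivAt.snd (h : HasDerivAt f f' t) : HasDerivAt (fun s => (f s).2) f'.2 t := by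
  simpa using h.hasFDerivAt.snd.hasDerivAt

end ProdDeriv

def keplerDist (a c x y : ℝ) : ℝ := √((y - c) ^ 2 + (1 + a ^ 2) * x ^ 2)

def keplerPotential (a c m x y : ℝ) : ℝ := m * (c * y + 1) / keplerDist a c x y

def kineticSp (x y u v : ℝ) : ℝ :=
  ((1 + y ^ 2) * u ^ 2 - 2 * x * y * u * v + (1 + x ^ 2) * v ^ 2) / 2

theorem Esp_eq_kineticSp_sub (a m₁ m₂ f x y u v : ℝ) :
    Esp a m₁ m₂ f x y u v = kineticSp x y u v - keplerPotential a a m₁ x y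
      - keplerPotential a (-a) m₂ x y - f * (x ^ 2 + y ^ 2) := by
  simp only [Esp, kineticSp, keplerPotential, keplerDist, sub_neg_eq_add]
  ring

theorem normA_sub_center (a c : ℝ) (p : ℝ × ℝ) :
    normA a (p - (0, c)) = keplerDist a c p.1 p.2 / √(1 + a ^ 2) := by
  have hA : 0 < 1 + a ^ 2 := by positivity
  rw [normA, keplerDist, ← sqrt_div' _ hA.le]
  congr 1
  simp only [Prod.fst_sub, Prod.snd_sub, sub_zero]
  field_simp
  ring

theorem div_normA_sub_center_pow_three (a c m : ℝ) (p : ℝ × ℝ) :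
    m / normA a (p - (0, c)) ^ 3
      = √(1 + a ^ 2) * m * (1 + a ^ 2) / keplerDist a c p.1 p.2 ^ 3 := by
  have hA : √(1 + a ^ 2) ^ 2 = 1 + a ^ 2 := sq_sqrt (by positivity)
  rw [normA_sub_center, div_pow, div_div_eq_mul_div, pow_succ, hA]
  ring

theorem keplerDist_pos {a c : ℝ} {p : ℝ × ℝ} (hp : p ≠ (0, c)) :
    0 < keplerDist a c p.1 p.2 := by
  rw [keplerDist, sqrt_pos]
  by_contra! h
  have hx : p.1 ^ 2 = 0 := by nlinarith [sq_nonneg (p.2 - c), sq_nonneg p.1, sq_nonneg a]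
  have hy : (p.2 - c) ^ 2 = 0 := by nlinarith [sq_nonneg (p.2 - c), sq_nonneg p.1, sq_nonneg a]
  exact hp (Prod.ext (pow_eq_zero_iff two_ne_zero |>.mp hx)
    (sub_eq_zero.mp (pow_eq_zero_iff two_ne_zero |>.mp hy)))

section Derivatives

variable {x y u v : ℝ → ℝ} {t : ℝ}

theorem hasDerivAt_kineticSp {u' v' : ℝ} (hx : HasDerivAt x (u t) t) (hy : HasDerivAt y (v t) t)
    (hu : HasDerivAt u u' t) (hv : HasDerivAt v v' t) :
    HasDerivAt (fun s => kineticSp (x s) (y s) (u s) (v s))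
      (u t * u' + v t * v' + (x t * v t - y t * u t) * (x t * v' - y t * u')) t := by
  have hL : ∀ s, kineticSp (x s) (y s) (u s) (v s)
      = (u s ^ 2 + v s ^ 2 + (x s * v s - y s * u s) ^ 2) / 2 := fun s => by
    simp only [kineticSp]; ring
  simp only [hL]
  exact ((((hu.pow 2).add (hv.pow 2)).add (((hx.mul hv).sub (hy.mul hu)).pow 2)).div_const 2)
    |>.congr_deriv (by norm_num; ring)

theorem hasDerivAt_keplerPotential {a c m U V : ℝ} (hc : c ^ 2 = a ^ 2)
    (hx : HasDerivAt x U t) (hy : HasDerivAt y V t) (hD : 0 < keplerDist a c (x t) (y t)) :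
    HasDerivAt (fun s => keplerPotential a c m (x s) (y s))
      (-(m * (1 + a ^ 2) / keplerDist a c (x t) (y t) ^ 3)
        * (x t * U + (y t - c) * V - c * x t * (x t * V - y t * U))) t := by
  have hD2 : keplerDist a c (x t) (y t) ^ 2 = (y t - c) ^ 2 + (1 + a ^ 2) * x t ^ 2 :=
    sq_sqrt (by positivity)
  have hDist : HasDerivAt (fun s => keplerDist a c (x s) (y s))
      (((y t - c) * V + (1 + a ^ 2) * x t * U) / keplerDist a c (x t) (y t)) t := by
    have hsq : HasDerivAt (fun s => (y s - c) ^ 2 + (1 + a ^ 2) * x s ^ 2)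
        (2 * (y t - c) * V + (1 + a ^ 2) * (2 * x t * U)) t :=
      (((hy.sub_const c).pow 2).add ((hx.pow 2).const_mul (1 + a ^ 2))).congr_deriv
        (by norm_num)
    refine (hsq.sqrt (by rw [← hD2]; positivity)).congr_deriv ?_
    rw [← keplerDist]
    field_simp
  refine ((((hy.const_mul c).add_const 1).const_mul m).div hDist hD.ne').congr_deriv ?_
  field_simp
  linear_combination m * c * V * hD2 - m * V * (y t - c) * hc

theorem hasDerivAt_Esp_zero {a m₁ m₂ f u' v' : ℝ}
    (hx : HasDerivAt x (u t) t) (hy : HasDerivAt y (v t) t)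
    (hu : HasDerivAt u u' t) (hv : HasDerivAt v v' t)
    (hD₁ : 0 < keplerDist a a (x t) (y t)) (hD₂ : 0 < keplerDist a (-a) (x t) (y t))
    (hu' : u' = -(m₁ * (1 + a ^ 2) / keplerDist a a (x t) (y t) ^ 3) * x t
      - m₂ * (1 + a ^ 2) / keplerDist a (-a) (x t) (y t) ^ 3 * x t + 2 * f * x t)
    (hv' : v' = -(m₁ * (1 + a ^ 2) / keplerDist a a (x t) (y t) ^ 3) * (y t - a)
      - m₂ * (1 + a ^ 2) / keplerDist a (-a) (x t) (y t) ^ 3 * (y t + a) + 2 * f * y t) :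
    HasDerivAt (fun s => Esp a m₁ m₂ f (x s) (y s) (u s) (v s)) 0 t := by
  simp only [Esp_eq_kineticSp_sub]
  have hHooke : HasDerivAt (fun s => f * (x s ^ 2 + y s ^ 2))
      (f * (2 * x t * u t + 2 * y t * v t)) t :=
    (HasDerivAt.const_mul f ((hx.pow 2).add (hy.pow 2))).congr_deriv (by norm_num)
  refine ((((hasDerivAt_kineticSp hx hy hu hv).sub (hasDerivAt_keplerPotential rfl hx hy hD₁)).sub
    (hasDerivAt_keplerPotential (neg_sq a) hx hy hD₂)).sub hHooke).congr_deriv ?_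
  rw [hu', hv']
  ring

end Derivatives

/-- The spherical energy `E_sp` is a first integral of the planar Lagrange
problem: it is constant along every solution. -/
theorem spherical_energy_first_integral_planar_lagrange
    (a m₁ m₂ f mhat₁ mhat₂ : ℝ)
    (hm₁ : mhat₁ = Real.sqrt (1 + a ^ 2) * m₁)
    (hm₂ : mhat₂ = Real.sqrt (1 + a ^ 2) * m₂)
    (Zt₁ Zt₂ : ℝ × ℝ) (hZt₁ : Zt₁ = (0, a)) (hZt₂ : Zt₂ = (0, -a))
    (qt : ℝ → ℝ × ℝ) (hne₁ : ∀ s, qt s ≠ Zt₁) (hne₂ : ∀ s, qt s ≠ Zt₂)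
    (hC2 : ContDiff ℝ 2 qt)
    (hODE : ∀ s, deriv (deriv qt) s
        = -(m₁ / (normA a (qt s - Zt₁)) ^ 3) • (qt s - Zt₁)
          - (m₂ / (normA a (qt s - Zt₂)) ^ 3) • (qt s - Zt₂)
          + (2 * f) • qt s) :
    ∀ s₁ s₂ : ℝ,
      Esp a mhat₁ mhat₂ f (qt s₁).1 (qt s₁).2
        (deriv (fun u => (qt u).1) s₁) (deriv (fun u => (qt u).2) s₁)
      = Esp a mhat₁ mhat₂ f (qt s₂).1 (qt s₂).2
        (deriv (fun u => (qt u).1) s₂) (deriv (fun u => (qt u).2) s₂) := by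
  subst hZt₁ hZt₂ hm₁ hm₂
  have hq (t : ℝ) : HasDerivAt qt (deriv qt t) t :=
    (hC2.differentiable (by norm_num) t).hasDerivAt
  have hq' (t : ℝ) : HasDerivAt (deriv qt) (deriv (deriv qt) t) t :=
    ((contDiff_succ_iff_deriv.mp hC2).2.2.differentiable one_ne_zero t).hasDerivAt
  have hE (t : ℝ) : HasDerivAt (fun s => Esp a (√(1 + a ^ 2) * m₁) (√(1 + a ^ 2) * m₂) f
      (qt s).1 (qt s).2 (deriv qt s).1 (deriv qt s).2) 0 t := by
    have hforce := hODE t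
    simp only [div_normA_sub_center_pow_three] at hforce
    refine hasDerivAt_Esp_zero (hq t).fst (hq t).snd (hq' t).fst (hq' t).snd
      (keplerDist_pos (hne₁ t)) (keplerDist_pos (hne₂ t)) ?_ ?_
    · simp [hforce]
    · simp [hforce]
  have hx (s : ℝ) : deriv (fun u => (qt u).1) s = (deriv qt s).1 := (hq s).fst.deriv
  have hy (s : ℝ) : deriv (fun u => (qt u).2) s = (deriv qt s).2 := (hq s).snd.deriv
  intro s₁ s₂
  rw [hx, hx, hy, hy]
  exact is_const_of_deriv_eq_zero (fun t => (hE t).differentiableAt) (fun t => (hE t).deriv)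
    s₁ s₂
end
end

section
/- Let (x̃,ỹ) ∈ ℝ² and (u,v) ∈ ℝ², and let N = x̃² + ỹ² + 1. Define q = (x̃,ỹ,−1)/√N ∈ S_SH and (x',y',z') = ( ((ỹ²+1)u − x̃ỹv)/N^{3/2}, (−x̃ỹu + (x̃²+1)v)/N^{3/2}, (x̃u + ỹv)/N^{3/2} ), the pushforward of (u,v) under the central projection. Then ⟨(x',y',z'), q⟩ = 0 and x'² + y'² + z'² = [(1+ỹ²)u² − 2x̃ỹuv + (1+x̃²)v²]/N² = [u² + v² + (uỹ − x̃v)²]/N². In particular, the spherical kinetic energy in the gnomonic chart, after the time change dt/dτ = N, equals (u² + v² + (uỹ − x̃v)²)/2, the sum of the planar kinetic energy and half the squared angular momentum. -/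
/-!
Write `p = (x̃, ỹ, -1)` and `w = (u, v, 0)`, so that `N = ⟨p, p⟩`. The pushforward is
`(N w - ⟨w, p⟩ p) / N^{3/2}`, i.e. `N^{-1/2}` times the component of `w` orthogonal to `p`.
This gives tangency at once, and its squared length is `(N ⟨w, w⟩ - ⟨w, p⟩²) / N²`, whose
numerator is `|w × p|² = u² + v² + (u ỹ - x̃ v)²` by Lagrange's identity.
-/

noncomputable section

def scaledRejection (p w : ℝ × ℝ × ℝ) : ℝ × ℝ × ℝ := dot3 p p • w - dot3 w p • p

lemma dot3_smul_smul (c d : ℝ) (a b : ℝ × ℝ × ℝ) :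
    dot3 (c • a) (d • b) = c * d * dot3 a b := by
  simp only [dot3, Prod.smul_fst, Prod.smul_snd, smul_eq_mul]
  ring

lemma dot3_scaledRejection_left (p w : ℝ × ℝ × ℝ) : dot3 (scaledRejection p w) p = 0 := by
  simp only [scaledRejection, dot3, Prod.fst_sub, Prod.snd_sub, Prod.smul_fst, Prod.smul_snd,
    smul_eq_mul]
  ring

lemma dot3_scaledRejection_self (p w : ℝ × ℝ × ℝ) :
    dot3 (scaledRejection p w) (scaledRejection p w)
      = dot3 p p * (dot3 p p * dot3 w w - dot3 w p ^ 2) := by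
  simp only [scaledRejection, dot3, Prod.fst_sub, Prod.snd_sub, Prod.smul_fst, Prod.smul_snd,
    smul_eq_mul]
  ring

lemma rpow_three_halves_sq {N : ℝ} (hN : 0 ≤ N) : (N ^ ((3 : ℝ) / 2)) ^ 2 = N ^ 3 := by
  rw [← Real.rpow_mul_natCast hN]
  norm_num

/-- The pushforward of a planar velocity `(u,v)` under the central projection is
tangent to the sphere, and its squared length equals the spherical kinetic
quadratic form in the gnomonic chart, which is the sum of the planar kinetic
form and the squared angular momentum, divided by `N²`. -/
theorem pushforward_central_projection_kinetic_energy
    (xt yt u v N : ℝ) (hN : N = xt ^ 2 + yt ^ 2 + 1)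
    (q : ℝ × ℝ × ℝ) (hq : q = (Real.sqrt N)⁻¹ • (xt, yt, (-1 : ℝ)))
    (x' y' z' : ℝ)
    (hx' : x' = ((yt ^ 2 + 1) * u - xt * yt * v) / N ^ ((3 : ℝ) / 2))
    (hy' : y' = (-(xt * yt) * u + (xt ^ 2 + 1) * v) / N ^ ((3 : ℝ) / 2))
    (hz' : z' = (xt * u + yt * v) / N ^ ((3 : ℝ) / 2)) :
    dot3 (x', y', z') q = 0
      ∧ x' ^ 2 + y' ^ 2 + z' ^ 2
          = ((1 + yt ^ 2) * u ^ 2 - 2 * xt * yt * u * v + (1 + xt ^ 2) * v ^ 2) / N ^ 2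
      ∧ ((1 + yt ^ 2) * u ^ 2 - 2 * xt * yt * u * v + (1 + xt ^ 2) * v ^ 2) / N ^ 2
          = (u ^ 2 + v ^ 2 + (u * yt - xt * v) ^ 2) / N ^ 2 := by
  set p : ℝ × ℝ × ℝ := (xt, yt, -1)
  set w : ℝ × ℝ × ℝ := (u, v, 0)
  have hNp : N = dot3 p p := by simp only [hN, dot3, p]; ring
  have hpos : 0 < N := by rw [hN]; positivity
  have hpush : (x', y', z') = (N ^ ((3 : ℝ) / 2))⁻¹ • scaledRejection p w := by
    simp only [hx', hy', hz', scaledRejection, dot3, p, w, Prod.smul_mk, Prod.mk_sub_mk,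
      smul_eq_mul, hN]
    refine Prod.ext ?_ (Prod.ext ?_ ?_) <;> (dsimp only; ring)
  have hkinetic : dot3 p p * dot3 w w - dot3 w p ^ 2
      = (1 + yt ^ 2) * u ^ 2 - 2 * xt * yt * u * v + (1 + xt ^ 2) * v ^ 2 := by
    simp only [dot3, p, w]; ring
  refine ⟨?_, ?_, by ring⟩
  · rw [hpush, hq, dot3_smul_smul, dot3_scaledRejection_left, mul_zero]
  · calc x' ^ 2 + y' ^ 2 + z' ^ 2 = dot3 (x', y', z') (x', y', z') := by simp only [dot3]; ring
      _ = N * (dot3 p p * dot3 w w - dot3 w p ^ 2) / (N ^ ((3 : ℝ) / 2)) ^ 2 := by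
        rw [hpush, dot3_smul_smul, dot3_scaledRejection_self, ← hNp]; ring
      _ = _ := by rw [hkinetic, rpow_three_halves_sq hpos.le]; field_simp
end
end

section
/- Let 0 < α ≤ β < π/2 and let a ≥ 0 satisfy 1 + a² = (1 + tan²β)/(1 + tan²α) (equivalently a² = tan²β − (1+a²)tan²α). Then for every θ ∈ ℝ, the point p(θ) = (tan α cos θ, tan β sin θ) of the ellipse x̃²/tan²α + ỹ²/tan²β = 1 satisfies ‖p(θ) − (0,a)‖_a + ‖p(θ) + (0,a)‖_a = 2 tan β/√(1+a²). In other words, the ellipse obtained by intersecting the elliptic cone x²/tan²α + y²/tan²β = z² with the plane {z = −1} has foci (0, a) and (0, −a) with respect to the affine norm ‖·‖_a. -/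
noncomputable section

/-- The ellipse `x̃²/tan²α + ỹ²/tan²β = 1` (the intersection of the elliptic cone
`x²/tan²α + y²/tan²β = z²` with the plane `{z = -1}`) has foci `(0, a)` and
`(0, -a)` with respect to the affine norm `‖·‖ₐ`, where
`1 + a² = (1 + tan²β)/(1 + tan²α)`: the sum of `‖·‖ₐ`-distances from any of its
points to `(0, ±a)` equals `2 tan β/√(1+a²)`. -/
theorem confocal_ellipse_foci_affine_norm
    (α β a : ℝ) (hα : 0 < α) (hαβ : α ≤ β) (hβ : β < Real.pi / 2) (ha : 0 ≤ a)
    (haa : 1 + a ^ 2 = (1 + Real.tan β ^ 2) / (1 + Real.tan α ^ 2)) :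
    ∀ θ : ℝ,
      normA a ((Real.tan α * Real.cos θ, Real.tan β * Real.sin θ) - (0, a))
        + normA a ((Real.tan α * Real.cos θ, Real.tan β * Real.sin θ) + (0, a))
      = 2 * Real.tan β / Real.sqrt (1 + a ^ 2) := by
  intro θ
  set t := Real.tan α with ht_def
  set T := Real.tan β with hT_def
  have hα2 : α < Real.pi / 2 := lt_of_le_of_lt hαβ hβ
  have ht : 0 < t := Real.tan_pos_of_pos_of_lt_pi_div_two hα hα2
  have hT : 0 < T := Real.tan_pos_of_pos_of_lt_pi_div_two (lt_of_lt_of_le hα hαβ) hβ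
  have h1a : (0:ℝ) < 1 + a ^ 2 := by positivity
  have h1t : (0:ℝ) < 1 + t ^ 2 := by positivity
  have key : t ^ 2 * (1 + a ^ 2) = T ^ 2 - a ^ 2 := by
    have := haa
    field_simp at this
    nlinarith [this]
  have haT : a ≤ T := by nlinarith [sq_nonneg t, sq_nonneg (t*a)]
  have hs1 : -1 ≤ Real.sin θ := Real.neg_one_le_sin θ
  have hs2 : Real.sin θ ≤ 1 := Real.sin_le_one θ
  have hpyth : Real.sin θ ^ 2 + Real.cos θ ^ 2 = 1 := Real.sin_sq_add_cos_sq θ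
  have hsq : Real.sqrt (1 + a ^ 2) > 0 := Real.sqrt_pos.mpr h1a
  have hsqsq : Real.sqrt (1 + a ^ 2) ^ 2 = 1 + a ^ 2 := Real.sq_sqrt h1a.le
  have hminus : T - a * Real.sin θ ≥ 0 := by nlinarith
  have hplus : T + a * Real.sin θ ≥ 0 := by nlinarith
  have e1 : normA a ((t * Real.cos θ, T * Real.sin θ) - (0, a))
      = (T - a * Real.sin θ) / Real.sqrt (1 + a ^ 2) := by
    have : ((t * Real.cos θ, T * Real.sin θ) - ((0:ℝ), a)).1 ^ 2
        + ((t * Real.cos θ, T * Real.sin θ) - ((0:ℝ), a)).2 ^ 2 / (1 + a ^ 2)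
        = ((T - a * Real.sin θ) / Real.sqrt (1 + a ^ 2)) ^ 2 := by
      simp only [Prod.fst_sub, Prod.snd_sub]
      rw [div_pow, hsqsq, eq_div_iff h1a.ne', add_mul,
        div_mul_cancel₀ _ h1a.ne']
      linear_combination (Real.cos θ) ^ 2 * key + (T ^ 2 - a ^ 2) * hpyth
    rw [normA, this, Real.sqrt_sq (by positivity)]
  have e2 : normA a ((t * Real.cos θ, T * Real.sin θ) + (0, a))
      = (T + a * Real.sin θ) / Real.sqrt (1 + a ^ 2) := by
    have : ((t * Real.cos θ, T * Real.sin θ) + ((0:ℝ), a)).1 ^ 2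
        + ((t * Real.cos θ, T * Real.sin θ) + ((0:ℝ), a)).2 ^ 2 / (1 + a ^ 2)
        = ((T + a * Real.sin θ) / Real.sqrt (1 + a ^ 2)) ^ 2 := by
      simp only [Prod.fst_add, Prod.snd_add]
      rw [div_pow, hsqsq, eq_div_iff h1a.ne', add_mul,
        div_mul_cancel₀ _ h1a.ne']
      linear_combination (Real.cos θ) ^ 2 * key + (T ^ 2 - a ^ 2) * hpyth
    rw [normA, this, Real.sqrt_sq (by positivity)]
  rw [e1, e2]
  field_simp
  ring
end
end

section
/- Let f ∈ ℝ and Z₀ = (0,0,−1) ∈ H_S. Suppose q̃ = (x̃,ỹ) : I → D is a C² curve satisfying the planar Hooke equation d²q̃/dt² = 2f · q̃ (which is the equation of motion of the Hooke problem with force function f(‖q̃‖ₐ⁻)² for every a ∈ (−1,1)). Let τ ↦ t(τ) solve dt/dτ = 1 − x̃(t)² − ỹ(t)² and set q(τ) := π_H(q̃(t(τ))). Then for every τ, q''(τ) + η(q''(τ), q(τ)) q(τ) = 2f · η(q(τ),Z₀)^{−3} · (Z₀ + η(q(τ),Z₀) q(τ)); i.e., the central projection carries solutions of the planar Hooke problem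 to solutions of the hyperbolic Hooke problem with force function f tanh² θ_{Z₀}. -/
/-!
Write `q = g • P` with `P = (q̃ ∘ t, -1)` and `g = (1 - |q̃ ∘ t|²)^(-1/2)`, so that `η(q,q) = -1`.
The Minkowski-tangential projection at `q` kills every multiple of `q`, in particular the
term `g'' P` of the Leibniz formula for `q''`. Because `dt/dτ = g⁻²`, we have
`g² (q̃ ∘ t)' = q̃' ∘ t`; differentiating this and using the Hooke equation gives
`g (q̃ ∘ t)'' + 2 g' (q̃ ∘ t)' = 2f g⁻³ (q̃ ∘ t)`. Hence `q'' ≡ 2f g⁻³ (P - Z₀) ≡ -2f g⁻³ Z₀`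
modulo `q`, and `η(q, Z₀) = -g`.
-/

noncomputable section

/-- The Minkowski form `η(u,v) = u₁v₁ + u₂v₂ - u₃v₃` on `ℝ³ = ℝ × ℝ × ℝ`. -/
def eta (u v : ℝ × ℝ × ℝ) : ℝ := u.1 * v.1 + u.2.1 * v.2.1 - u.2.2 * v.2.2

/-- Central projection from the unit disc in the plane `{z = -1}` onto the lower
sheet of the hyperboloid `η(q,q) = -1`. -/
def centralProjH (p : ℝ × ℝ) : ℝ × ℝ × ℝ :=
  (Real.sqrt (1 - p.1 ^ 2 - p.2 ^ 2))⁻¹ • (p.1, p.2, (-1 : ℝ))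

open Real

section Calculus

variable {E : Type*} [NormedAddCommGroup E] [NormedSpace ℝ E]

theorem contDiff_succ_of_forall_hasDerivAt {F : E → E} {x : ℝ → E} (n : ℕ)
    (hF : ContDiff ℝ n F) (hx : ∀ τ, HasDerivAt x (F (x τ)) τ) :
    ContDiff ℝ (n + 1) x := by
  have hdiff : Differentiable ℝ x := fun τ => (hx τ).differentiableAt
  have hderiv : deriv x = F ∘ x := funext fun τ => (hx τ).deriv
  induction n with
  | zero =>
    simpa [contDiff_one_iff_deriv, hderiv] using
      ⟨hdiff, hF.continuous.comp hdiff.continuous⟩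
  | succ n ih =>
    have hx' : ContDiff ℝ (n + 1) x := ih (hF.of_le (by norm_cast; omega))
    rw [contDiff_succ_iff_deriv, hderiv]
    exact ⟨hdiff, by simp, by simpa using hF.comp hx'⟩

theorem deriv_deriv_smul {g : ℝ → ℝ} {P : ℝ → E} {τ : ℝ}
    (hg : Differentiable ℝ g) (hP : Differentiable ℝ P)
    (hg' : DifferentiableAt ℝ (deriv g) τ) (hP' : DifferentiableAt ℝ (deriv P) τ) :
    deriv (deriv fun σ => g σ • P σ) τ
      = deriv (deriv g) τ • P τ + (2 * deriv g τ) • deriv P τ + g τ • deriv (deriv P) τ := by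
  have h : deriv (fun σ => g σ • P σ) = fun σ => g σ • deriv P σ + deriv g σ • P σ :=
    funext fun σ => deriv_fun_smul (hg σ) (hP σ)
  rw [h, (((hg τ).hasDerivAt.fun_smul hP'.hasDerivAt).fun_add
    (hg'.hasDerivAt.fun_smul (hP τ).hasDerivAt)).deriv]
  module

theorem time_change_deriv_deriv_comp {p : ℝ → E} {t φ g : ℝ → ℝ} {τ : ℝ} {a : E}
    (hp : Differentiable ℝ p) (hp' : HasDerivAt (deriv p) a (t τ))
    (ht : ∀ σ, HasDerivAt t (φ σ) σ) (hgφ : ∀ σ, g σ ^ 2 * φ σ = 1)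
    (hg : DifferentiableAt ℝ g τ) (hu : DifferentiableAt ℝ (deriv fun σ => p (t σ)) τ) :
    (2 * deriv g τ) • deriv (fun σ => p (t σ)) τ + g τ • deriv (deriv fun σ => p (t σ)) τ
      = (g τ ^ 3)⁻¹ • a := by
  have hvel : deriv (fun σ => p (t σ)) = fun σ => φ σ • deriv p (t σ) :=
    funext fun σ => ((hp (t σ)).hasDerivAt.scomp σ (ht σ)).deriv
  have hvel' : (fun σ => g σ ^ 2 • deriv (fun σ => p (t σ)) σ) = fun σ => deriv p (t σ) := by
    funext σ
    rw [hvel, smul_smul, hgφ, one_smul]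
  have h := congrArg (deriv · τ) hvel'
  have hcomp : HasDerivAt (fun σ => deriv p (t σ)) (φ τ • a) τ := hp'.scomp τ (ht τ)
  rw [((hg.hasDerivAt.fun_pow 2).fun_smul hu.hasDerivAt).deriv, hcomp.deriv] at h
  simp only [Nat.cast_ofNat, Nat.add_one_sub_one, pow_one] at h
  have hg0 : g τ ≠ 0 := by
    rintro h0
    simpa [h0] using hgφ τ
  have hφ : φ τ = (g τ ^ 2)⁻¹ := eq_inv_of_mul_eq_one_right (hgφ τ)
  calc _ = (g τ)⁻¹ • (g τ ^ 2 • deriv (deriv fun σ => p (t σ)) τ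
        + (2 * g τ * deriv g τ) • deriv (fun σ => p (t σ)) τ) := by
        match_scalars <;> field_simp
    _ = _ := by
        rw [h, hφ, smul_smul]
        congr 1
        field_simp

end Calculus

theorem add_eta_smul_of_eq_smul_add_smul {Q Z v : ℝ × ℝ × ℝ} {c k : ℝ} (hQ : eta Q Q = -1)
    (hv : v = c • Q + k • Z) : v + eta v Q • Q = k • (Z + eta Q Z • Q) := by
  have hη : eta v Q = -c + k * eta Q Z := by
    simp only [hv, eta, Prod.fst_add, Prod.snd_add, Prod.smul_fst, Prod.smul_snd,
      smul_eq_mul] at hQ ⊢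
    linear_combination c * hQ
  rw [hη, hv]
  module

def horizontal : ℝ × ℝ →L[ℝ] ℝ × ℝ × ℝ :=
  (ContinuousLinearMap.fst ℝ ℝ ℝ).prod ((ContinuousLinearMap.snd ℝ ℝ ℝ).prod 0)

@[simp]
theorem horizontal_apply (p : ℝ × ℝ) : horizontal p = (p.1, p.2, 0) := rfl

theorem centralProjH_eq_smul (p : ℝ × ℝ) :
    centralProjH p = (√(1 - p.1 ^ 2 - p.2 ^ 2))⁻¹ • (horizontal p + (0, 0, -1)) := by
  simp [centralProjH]

theorem eta_centralProjH_self {p : ℝ × ℝ} (hp : p.1 ^ 2 + p.2 ^ 2 < 1) :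
    eta (centralProjH p) (centralProjH p) = -1 := by
  have h : 0 < 1 - p.1 ^ 2 - p.2 ^ 2 := by linarith
  have hs := sq_sqrt h.le
  have hs0 := (sqrt_pos.2 h).ne'
  simp only [eta, centralProjH, Prod.smul_mk, smul_eq_mul]
  field_simp
  linear_combination hs

theorem eta_centralProjH_apex (p : ℝ × ℝ) :
    eta (centralProjH p) (0, 0, -1) = -(√(1 - p.1 ^ 2 - p.2 ^ 2))⁻¹ := by
  simp [eta, centralProjH]

theorem exists_deriv_deriv_centralProjH_comp {f : ℝ} {qt : ℝ → ℝ × ℝ} {t : ℝ → ℝ}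
    (hdisc : ∀ s, (qt s).1 ^ 2 + (qt s).2 ^ 2 < 1) (hC2 : ContDiff ℝ 2 qt)
    (hODE : ∀ s, deriv (deriv qt) s = (2 * f) • qt s)
    (ht : ∀ τ, HasDerivAt t (1 - (qt (t τ)).1 ^ 2 - (qt (t τ)).2 ^ 2) τ) (τ : ℝ) :
    ∃ c : ℝ, deriv (deriv fun σ => centralProjH (qt (t σ))) τ
      = c • centralProjH (qt (t τ))
        + (-(2 * f) * √(1 - (qt (t τ)).1 ^ 2 - (qt (t τ)).2 ^ 2) ^ 3) • (0, 0, -1) := by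
  set u : ℝ → ℝ × ℝ := fun σ => qt (t σ) with hu_def
  set g : ℝ → ℝ := fun σ => (√(1 - (u σ).1 ^ 2 - (u σ).2 ^ 2))⁻¹ with hg_def
  set P : ℝ → ℝ × ℝ × ℝ := fun σ => horizontal (u σ) + (0, 0, -1) with hP_def
  have hφ : ∀ σ, 0 < 1 - (u σ).1 ^ 2 - (u σ).2 ^ 2 := fun σ => by linarith [hdisc (t σ)]
  have ht2 : ContDiff ℝ 2 t :=
    contDiff_succ_of_forall_hasDerivAt 1 (F := fun s => 1 - (qt s).1 ^ 2 - (qt s).2 ^ 2)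
      ((by fun_prop : ContDiff ℝ 2 _).of_le (by norm_num)) ht
  have hu : ContDiff ℝ 2 u := hC2.comp ht2
  have hg : ContDiff ℝ 2 g :=
    ((by fun_prop : ContDiff ℝ 2 fun σ => 1 - (u σ).1 ^ 2 - (u σ).2 ^ 2).sqrt
      fun σ => (hφ σ).ne').inv fun σ => (sqrt_pos.2 (hφ σ)).ne'
  have hP : ContDiff ℝ 2 P := by fun_prop
  have hq : (fun σ => centralProjH (u σ)) = fun σ => g σ • P σ :=
    funext fun σ => centralProjH_eq_smul _
  have hP' : deriv P = fun σ => horizontal (deriv u σ) := funext fun σ =>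
    ((horizontal.hasFDerivAt.comp_hasDerivAt σ
      (hu.differentiable two_ne_zero σ).hasDerivAt).add_const _).deriv
  have hP'' : deriv (deriv P) τ = horizontal (deriv (deriv u) τ) := by
    rw [hP']
    exact (horizontal.hasFDerivAt.comp_hasDerivAt τ
      (hu.differentiable_deriv_two τ).hasDerivAt).deriv
  have hgφ : ∀ σ, g σ ^ 2 * (1 - (qt (t σ)).1 ^ 2 - (qt (t σ)).2 ^ 2) = 1 := fun σ => by
    rw [inv_pow, sq_sqrt (hφ σ).le, inv_mul_cancel₀ (hφ σ).ne']
  have hqt'' : HasDerivAt (deriv qt) ((2 * f) • qt (t τ)) (t τ) :=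
    hODE (t τ) ▸ (hC2.differentiable_deriv_two (t τ)).hasDerivAt
  have htime := time_change_deriv_deriv_comp (hC2.differentiable two_ne_zero) hqt'' ht hgφ
    (hg.differentiable two_ne_zero τ) (hu.differentiable_deriv_two τ)
  refine ⟨(deriv (deriv g) τ + 2 * f / g τ ^ 3) / g τ, ?_⟩
  rw [hq, deriv_deriv_smul (hg.differentiable two_ne_zero) (hP.differentiable two_ne_zero)
    (hg.differentiable_deriv_two τ) (hP.differentiable_deriv_two τ), hP'', hP', add_assoc,
    ← map_smul, ← map_smul, ← map_add, htime, congrFun hq τ]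
  have hS : √(1 - (u τ).1 ^ 2 - (u τ).2 ^ 2) ≠ 0 := (sqrt_pos.2 (hφ τ)).ne'
  simp only [map_smul, hP_def, hg_def]
  match_scalars <;> field_simp
  ring

/-- The central projection carries solutions of the planar Hooke problem (with
force function `f(‖·‖ₐ⁻)²` for every `a ∈ (-1,1)`) to solutions of the
hyperbolic Hooke problem with force function `f tanh² θ_{Z₀}`. -/
theorem hooke_central_projection_hyperbolic
    (f : ℝ)
    (Z0 : ℝ × ℝ × ℝ) (hZ0 : Z0 = ((0 : ℝ), (0 : ℝ), (-1 : ℝ)))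
    (qt : ℝ → ℝ × ℝ)
    (hdisc : ∀ s, (qt s).1 ^ 2 + (qt s).2 ^ 2 < 1)
    (hC2 : ContDiff ℝ 2 qt)
    (hODE : ∀ s, deriv (deriv qt) s = (2 * f) • qt s)
    (t : ℝ → ℝ)
    (ht : ∀ τ, HasDerivAt t (1 - (qt (t τ)).1 ^ 2 - (qt (t τ)).2 ^ 2) τ)
    (q : ℝ → ℝ × ℝ × ℝ) (hq : q = fun τ => centralProjH (qt (t τ))) :
    ∀ τ, deriv (deriv q) τ + eta (deriv (deriv q) τ) (q τ) • q τ
      = (2 * f / (eta (q τ) Z0) ^ 3) • (Z0 + eta (q τ) Z0 • q τ) := by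
  subst hZ0 hq
  intro τ
  obtain ⟨c, hc⟩ := exists_deriv_deriv_centralProjH_comp hdisc hC2 hODE ht τ
  rw [add_eta_smul_of_eq_smul_add_smul (eta_centralProjH_self (hdisc (t τ))) hc,
    eta_centralProjH_apex, neg_inv, inv_pow, div_inv_eq_mul]
  congr 1
  ring
end
end

section
/- Let z, w ∈ ℂ with z ≠ 0 and |z| ≠ 1, and let f, m̂ ∈ ℝ. Suppose (z,w) lies on the m̂-energy level of the spherical Hooke problem in the stereographic chart: (1+|z|²)²|w|²/8 + 4f|z|²/(1−|z|²)² = m̂. Set q = z² and p = w/\bar{z}. Then (q,p) satisfies (1−|q|²)²|p|²/8 + 4f − m̂(1+|q|²)/|q| + 2m̂ = 0; i.e., (q,p) lies on the energy level −(4f + 2m̂) of the hyperbolic Kepler problem with mass m̂ in the Poincaré-disc chart. Thus the complex square mapping conformally transforms the spherical Hooke problem into the hyperbolic Kepler problem on fixed energy levels. -/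
/-!
Writing `a = ‖z‖`, the square map gives `‖q‖ = a²` and `‖p‖ = ‖w‖ / a`, and since
`(1 + a⁴) / a² - 2 = ((1 - a²) / a)²`, the Kepler energy shifted by `4f + 2m̂` is the Hooke
energy shifted by `m̂` times the conformal factor `((1 - a²) / a)²`. Hence the `m̂`-level of the
Hooke problem goes to the `-(4f + 2m̂)`-level of the Kepler problem.
-/

open ComplexConjugate

/-- Kinetic energy of the round metric `4 |dz|² / (1 + |z|²)²` plus the potential `f tan² θ`. -/
noncomputable def sphericalHookeHamiltonian (f : ℝ) (z w : ℂ) : ℝ :=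
  (1 + ‖z‖ ^ 2) ^ 2 * ‖w‖ ^ 2 / 8 + 4 * f * ‖z‖ ^ 2 / (1 - ‖z‖ ^ 2) ^ 2

/-- Kinetic energy of the Poincaré metric `4 |dq|² / (1 - |q|²)²` plus the Kepler potential. -/
noncomputable def hyperbolicKeplerHamiltonian (m : ℝ) (q p : ℂ) : ℝ :=
  (1 - ‖q‖ ^ 2) ^ 2 * ‖p‖ ^ 2 / 8 - m * (1 + ‖q‖ ^ 2) / ‖q‖

theorem hyperbolicKeplerHamiltonian_sq_div_conj (f m : ℝ) {z : ℂ} (hz : z ≠ 0)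
    (hz1 : ‖z‖ ≠ 1) (w : ℂ) :
    hyperbolicKeplerHamiltonian m (z ^ 2) (w / conj z) + 4 * f + 2 * m =
      ((1 - ‖z‖ ^ 2) / ‖z‖) ^ 2 * (sphericalHookeHamiltonian f z w - m) := by
  have ha : ‖z‖ ≠ 0 := norm_ne_zero_iff.mpr hz
  have hs : 1 - ‖z‖ ^ 2 ≠ 0 :=
    sub_ne_zero.mpr fun h ↦ hz1 ((pow_eq_one_iff_of_nonneg (norm_nonneg z) two_ne_zero).mp h.symm)
  unfold hyperbolicKeplerHamiltonian sphericalHookeHamiltonian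
  rw [norm_pow, norm_div, Complex.norm_conj]
  field_simp
  ring

/-- The complex square mapping conformally transforms the spherical Hooke
problem into the hyperbolic Kepler problem on fixed energy levels: a point of
the `m̂`-energy level of the spherical Hooke problem in the stereographic chart
is sent by `(z,w) ↦ (z², w/z̄)` to a point of the `-(4f + 2m̂)`-energy level of
the hyperbolic Kepler problem in the Poincaré-disc chart. -/
theorem complex_square_spherical_hooke_to_hyperbolic_kepler
    (z w : ℂ) (hz : z ≠ 0) (hz1 : ‖z‖ ≠ 1) (f mhat : ℝ)
    (h : (1 + ‖z‖ ^ 2) ^ 2 * ‖w‖ ^ 2 / 8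
        + 4 * f * ‖z‖ ^ 2 / (1 - ‖z‖ ^ 2) ^ 2 = mhat)
    (q p : ℂ) (hq : q = z ^ 2) (hp : p = w / (starRingEnd ℂ z)) :
    (1 - ‖q‖ ^ 2) ^ 2 * ‖p‖ ^ 2 / 8 + 4 * f
        - mhat * (1 + ‖q‖ ^ 2) / ‖q‖ + 2 * mhat = 0 := by
  have hlevel : sphericalHookeHamiltonian f z w = mhat := h
  have key := hyperbolicKeplerHamiltonian_sq_div_conj f mhat hz hz1 w
  rw [hlevel, sub_self, mul_zero, ← hq, ← hp] at key
  unfold hyperbolicKeplerHamiltonian at key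
  linarith
end

section
/- Let z, w ∈ ℂ with z ≠ 0, and let f, m̂ ∈ ℝ. Suppose (z,w) lies on the m̂-energy level of the hyperbolic Hooke problem in the Poincaré-disc chart: (1−|z|²)²|w|²/8 + 4f|z|²/(1+|z|²)² = m̂. Set q = z² and p = w/\bar{z}. Then (q,p) satisfies (1−|q|²)²|p|²/8 + 4f − m̂(1+|q|²)/|q| − 2m̂ = 0; i.e., (q,p) lies on the energy level −(4f − 2m̂) of the hyperbolic Kepler problem with mass m̂ in the Poincaré-disc chart. Thus the complex square mapping conformally transforms the hyperbolic Hooke problem into the hyperbolic Kepler problem on fixed energy levels. -/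
/-!
Write `r = ‖z‖`. Under `q = z²`, `p = w / z̄` one has `‖q‖ = r²` and `‖p‖ = ‖w‖ / r`, and the
factorisations `1 - r⁴ = (1 - r²)(1 + r²)` and `(1 + r⁴)/r² + 2 = (1 + r²)²/r²` show that the
Kepler Hamiltonian shifted by `4f - 2m̂` is the Hooke Hamiltonian minus `m̂`, multiplied by the
conformal factor `(1 + r²)²/r²`. Hence the `m̂`-level of the Hooke problem is carried into the
`-(4f - 2m̂)`-level of the Kepler problem.
-/

noncomputable section

open ComplexConjugate

namespace HyperbolicDisc

def hookeHamiltonian (f : ℝ) (z w : ℂ) : ℝ :=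
  (1 - ‖z‖ ^ 2) ^ 2 * ‖w‖ ^ 2 / 8 + 4 * f * ‖z‖ ^ 2 / (1 + ‖z‖ ^ 2) ^ 2

def keplerHamiltonian (m : ℝ) (q p : ℂ) : ℝ :=
  (1 - ‖q‖ ^ 2) ^ 2 * ‖p‖ ^ 2 / 8 - m * (1 + ‖q‖ ^ 2) / ‖q‖

theorem keplerHamiltonian_sq_div_conj (f m : ℝ) {z : ℂ} (hz : z ≠ 0) (w : ℂ) :
    keplerHamiltonian m (z ^ 2) (w / conj z) + (4 * f - 2 * m) =
      (1 + ‖z‖ ^ 2) ^ 2 / ‖z‖ ^ 2 * (hookeHamiltonian f z w - m) := by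
  have hr : ‖z‖ ≠ 0 := norm_ne_zero_iff.mpr hz
  simp only [keplerHamiltonian, hookeHamiltonian, norm_pow, norm_div, Complex.norm_conj]
  field_simp
  ring

end HyperbolicDisc

/-- The complex square mapping conformally transforms the hyperbolic Hooke
problem into the hyperbolic Kepler problem on fixed energy levels: a point of
the `m̂`-energy level of the hyperbolic Hooke problem in the Poincaré-disc chart
is sent by `(z,w) ↦ (z², w/z̄)` to a point of the `-(4f - 2m̂)`-energy level of
the hyperbolic Kepler problem in the Poincaré-disc chart. -/
theorem complex_square_hyperbolic_hooke_to_hyperbolic_kepler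
    (z w : ℂ) (hz : z ≠ 0) (f mhat : ℝ)
    (h : (1 - ‖z‖ ^ 2) ^ 2 * ‖w‖ ^ 2 / 8
        + 4 * f * ‖z‖ ^ 2 / (1 + ‖z‖ ^ 2) ^ 2 = mhat)
    (q p : ℂ) (hq : q = z ^ 2) (hp : p = w / (starRingEnd ℂ z)) :
    (1 - ‖q‖ ^ 2) ^ 2 * ‖p‖ ^ 2 / 8 + 4 * f
        - mhat * (1 + ‖q‖ ^ 2) / ‖q‖ - 2 * mhat = 0 := by
  have hooke_level : HyperbolicDisc.hookeHamiltonian f z w = mhat := h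
  have kepler_level := HyperbolicDisc.keplerHamiltonian_sq_div_conj f mhat hz w
  rw [hooke_level, sub_self, mul_zero, ← hq, ← hp,
    HyperbolicDisc.keplerHamiltonian] at kepler_level
  linarith
end
end

section
/- Let z, w ∈ ℂ with |z| ≠ 1, and let f, m̂ ∈ ℝ. If (z,w) lies on the m̂-energy level of the spherical Hooke problem with stiffness f in the stereographic chart, i.e., (1+|z|²)²|w|²/8 + 4f|z|²/(1−|z|²)² = m̂, then the same pair (z,w) lies on the m̂-energy level of the hyperbolic Hooke problem with stiffness f + m̂ in the Poincaré-disc chart: (1−|z|²)²|w|²/8 + 4(f+m̂)|z|²/(1+|z|²)² = m̂. Thus the spherical and hyperbolic Hooke problems are in correspondence on fixed energy levels (up to a time reparametrization by the positive factor (1−|z|²)²/(1+|z|²)²). -/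
/-!
With `r = |z|²` and `p = |w|²`, multiplying the spherical Hamiltonian by the conformal factor
`((1 - r) / (1 + r))²` turns its kinetic term into the hyperbolic one and its potential
`4 f r / (1 - r)²` into `4 f r / (1 + r)²`. On the energy level `m̂` the right-hand side becomes
`m̂ ((1 - r) / (1 + r))² = m̂ - 4 m̂ r / (1 + r)²`, because `(1 - r)² + 4 r = (1 + r)²`, and the
defect `4 m̂ r / (1 + r)²` is exactly what raising the stiffness from `f` to `f + m̂` adds.
-/

namespace HookeProblem

variable {K : Type*} [Field K]

def sphericalEnergy (f r p : K) : K :=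
  (1 + r) ^ 2 * p / 8 + 4 * f * r / (1 - r) ^ 2

def hyperbolicEnergy (g r p : K) : K :=
  (1 - r) ^ 2 * p / 8 + 4 * g * r / (1 + r) ^ 2

theorem hyperbolicEnergy_add_eq {f m r p : K} (hsub : 1 - r ≠ 0) (hadd : 1 + r ≠ 0) :
    hyperbolicEnergy (f + m) r p =
      ((1 - r) / (1 + r)) ^ 2 * sphericalEnergy f r p + 4 * m * r / (1 + r) ^ 2 := by
  unfold hyperbolicEnergy sphericalEnergy
  field_simp
  ring

theorem hyperbolicEnergy_add_eq_of_sphericalEnergy_eq {f m r p : K}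
    (hsub : 1 - r ≠ 0) (hadd : 1 + r ≠ 0) (h : sphericalEnergy f r p = m) :
    hyperbolicEnergy (f + m) r p = m := by
  rw [hyperbolicEnergy_add_eq hsub hadd, h]
  field_simp
  ring

end HookeProblem

open HookeProblem in
/-- The spherical and hyperbolic Hooke problems are in correspondence on fixed
energy levels: a point of the `m̂`-energy level of the spherical Hooke problem
with stiffness `f` in the stereographic chart lies on the `m̂`-energy level of
the hyperbolic Hooke problem with stiffness `f + m̂` in the Poincaré-disc
chart. -/
theorem spherical_hooke_to_hyperbolic_hooke_energy_levels
    (z w : ℂ) (hz1 : ‖z‖ ≠ 1) (f mhat : ℝ)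
    (h : (1 + ‖z‖ ^ 2) ^ 2 * ‖w‖ ^ 2 / 8
        + 4 * f * ‖z‖ ^ 2 / (1 - ‖z‖ ^ 2) ^ 2 = mhat) :
    (1 - ‖z‖ ^ 2) ^ 2 * ‖w‖ ^ 2 / 8
        + 4 * (f + mhat) * ‖z‖ ^ 2 / (1 + ‖z‖ ^ 2) ^ 2 = mhat := by
  have hsub : 1 - ‖z‖ ^ 2 ≠ 0 := sub_ne_zero.mpr fun h₁ =>
    hz1 ((pow_eq_one_iff_of_nonneg (norm_nonneg z) two_ne_zero).mp h₁.symm)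
  exact hyperbolicEnergy_add_eq_of_sphericalEnergy_eq hsub (by positivity) h
end

section
/- Let 0 < a < 1 and let B ∈ ℝ with B ≠ 1 and B² ≠ a². Then c := 2√a/(1−a) satisfies c²/(1+c²) = [2(B²−a²)/((a−1)(B−1)(B−a))]/(1+c²) + 2(B²−a²)/((a+1)(B−1)(B+a)). In particular the solution c does not depend on B: the family of conics G₂ = 0 (parametrized by B) is a confocal family, with common foci at distance parameter c = 2√a/(1−a) with respect to the compatible affine norm ‖(X̃,Ỹ)‖_c² = X̃²/(1+c²) + Ỹ². -/
noncomputable section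

/-- The family of conics `G₂ = 0` arising from the complex square mapping is a
confocal family: the focal parameter `c = 2√a/(1-a)`, determined by the
equation `c²/(1+c²) = d₁/(1+c²) - d₂` with `d₁ = 2(B²-a²)/((a-1)(B-1)(B-a))` and
`d₂ = -2(B²-a²)/((a+1)(B-1)(B+a))`, does not depend on `B`. -/
theorem G2_confocal_family (a B : ℝ) (ha0 : 0 < a) (ha1 : a < 1)
    (hB1 : B ≠ 1) (hBa : B ^ 2 ≠ a ^ 2)
    (c : ℝ) (hc : c = 2 * Real.sqrt a / (1 - a)) :
    c ^ 2 / (1 + c ^ 2)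
      = (2 * (B ^ 2 - a ^ 2) / ((a - 1) * (B - 1) * (B - a))) / (1 + c ^ 2)
        + 2 * (B ^ 2 - a ^ 2) / ((a + 1) * (B - 1) * (B + a)) := by
  have hs : Real.sqrt a ^ 2 = a := Real.sq_sqrt ha0.le
  have ha1' : (1 : ℝ) - a ≠ 0 := by nlinarith
  have hc2 : c ^ 2 = 4 * a / (1 - a) ^ 2 := by
    rw [hc, div_pow, mul_pow, hs]; ring_nf
  have h1c : 1 + c ^ 2 = (1 + a) ^ 2 / (1 - a) ^ 2 := by
    rw [hc2]; field_simp; ring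
  have hB1' : B - 1 ≠ 0 := sub_ne_zero.mpr hB1
  have hBma : B - a ≠ 0 := fun h => hBa (by nlinarith [sub_eq_zero.mp h])
  have hBpa : B + a ≠ 0 := fun h => hBa (by nlinarith [eq_neg_of_add_eq_zero_left h])
  have ha1p : (1 : ℝ) + a ≠ 0 := by positivity
  have ham1 : a - 1 ≠ 0 := fun h => ha1' (by linarith [sub_eq_zero.mp h])
  rw [h1c, hc2]
  field_simp
  ring
end
end
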